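/- Let ξ₁, ξ₂ be reals with |ξ₁| ≤ ξ₂ ≤ 1. Then β = ⟨[(ξ₁+ξ₂)/2,(ξ₁+ξ₂)/2],[(ξ₂−ξ₁)/2,(ξ₂−ξ₁)/2]⟩ is an IVIFN with S(β) = ξ₁, H(β) = ξ₂, E2(β) = 0, and E3(β) = 0; moreover any IVIFN γ with S(γ) = ξ₁ and H(γ) = ξ₂ satisfies β ≤_HZX γ. -/

import Mathlib

/-! The width `E2` is nonnegative and vanishes exactly when both intervals are points; a point
IVIFN is determined by its score and accuracy. Hence `β` is the only IVIFN of its fibre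
`{S = ξ₁, H = ξ₂}` with `E2 = 0`, and every other member of the fibre exceeds it already in `E2`. -/

structure IVIFN where
  muL : ℝ
  muR : ℝ
  nuL : ℝ
  nuR : ℝ
  muL_nonneg : 0 ≤ muL
  mu_le : muL ≤ muR
  muR_le_one : muR ≤ 1
  nuL_nonneg : 0 ≤ nuL
  nu_le : nuL ≤ nuR
  nuR_le_one : nuR ≤ 1
  sum_le_one : muR + nuR ≤ 1

noncomputable def Sf (a : IVIFN) : ℝ := (a.muL + a.muR) / 2 - (a.nuL + a.nuR) / 2
noncomputable def Hf (a : IVIFN) : ℝ := (a.muL + a.muR) / 2 + (a.nuL + a.nuR) / 2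
noncomputable def E2 (a : IVIFN) : ℝ := (a.muR - a.muL + a.nuR - a.nuL) / 2
noncomputable def E3 (a : IVIFN) : ℝ := a.muR - a.muL

def ltHZX (a b : IVIFN) : Prop :=
  Sf a < Sf b ∨ (Sf a = Sf b ∧ (Hf a < Hf b ∨ (Hf a = Hf b ∧
    (E2 a < E2 b ∨ (E2 a = E2 b ∧ E3 a < E3 b)))))

def leHZX (a b : IVIFN) : Prop := a = b ∨ ltHZX a b

namespace IVIFN

lemma E2_nonneg (a : IVIFN) : 0 ≤ E2 a := by
  unfold E2
  linarith [a.mu_le, a.nu_le]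

lemma muL_eq_muR_and_nuL_eq_nuR_of_E2_eq_zero {a : IVIFN} (h : E2 a = 0) :
    a.muL = a.muR ∧ a.nuL = a.nuR := by
  unfold E2 at h
  constructor <;> linarith [a.mu_le, a.nu_le]

lemma eq_of_E2_eq_zero {a b : IVIFN} (hS : Sf a = Sf b) (hH : Hf a = Hf b)
    (ha : E2 a = 0) (hb : E2 b = 0) : a = b := by
  obtain ⟨hμa, hνa⟩ := muL_eq_muR_and_nuL_eq_nuR_of_E2_eq_zero ha
  obtain ⟨hμb, hνb⟩ := muL_eq_muR_and_nuL_eq_nuR_of_E2_eq_zero hb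
  unfold Sf at hS
  unfold Hf at hH
  cases a
  cases b
  simp only [mk.injEq] at *
  refine ⟨?_, ?_, ?_, ?_⟩ <;> linarith

lemma leHZX_of_E2_eq_zero {a b : IVIFN} (hS : Sf a = Sf b) (hH : Hf a = Hf b)
    (ha : E2 a = 0) : leHZX a b := by
  rcases (E2_nonneg b).eq_or_lt with hb | hb
  · exact Or.inl (eq_of_E2_eq_zero hS hH ha hb.symm)
  · exact Or.inr (Or.inr ⟨hS, Or.inr ⟨hH, Or.inl (ha ▸ hb)⟩⟩)

noncomputable def ofScoreAccuracy (ξ₁ ξ₂ : ℝ) (h1 : |ξ₁| ≤ ξ₂) (h2 : ξ₂ ≤ 1) : IVIFN where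
  muL := (ξ₁ + ξ₂) / 2
  muR := (ξ₁ + ξ₂) / 2
  nuL := (ξ₂ - ξ₁) / 2
  nuR := (ξ₂ - ξ₁) / 2
  muL_nonneg := by linarith [neg_abs_le ξ₁]
  mu_le := le_rfl
  muR_le_one := by linarith [le_abs_self ξ₁]
  nuL_nonneg := by linarith [le_abs_self ξ₁]
  nu_le := le_rfl
  nuR_le_one := by linarith [neg_abs_le ξ₁]
  sum_le_one := by linarith

section ofScoreAccuracy

variable (ξ₁ ξ₂ : ℝ) (h1 : |ξ₁| ≤ ξ₂) (h2 : ξ₂ ≤ 1)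

lemma Sf_ofScoreAccuracy : Sf (ofScoreAccuracy ξ₁ ξ₂ h1 h2) = ξ₁ := by
  simp only [Sf, ofScoreAccuracy]
  ring

lemma Hf_ofScoreAccuracy : Hf (ofScoreAccuracy ξ₁ ξ₂ h1 h2) = ξ₂ := by
  simp only [Hf, ofScoreAccuracy]
  ring

lemma E2_ofScoreAccuracy : E2 (ofScoreAccuracy ξ₁ ξ₂ h1 h2) = 0 := by
  simp only [E2, ofScoreAccuracy]
  ring

lemma E3_ofScoreAccuracy : E3 (ofScoreAccuracy ξ₁ ξ₂ h1 h2) = 0 :=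
  sub_self _

end ofScoreAccuracy

end IVIFN

theorem least_with_score_accuracy (ξ₁ ξ₂ : ℝ) (h1 : |ξ₁| ≤ ξ₂) (h2 : ξ₂ ≤ 1) :
    ∃ β : IVIFN, β.muL = (ξ₁ + ξ₂) / 2 ∧ β.muR = (ξ₁ + ξ₂) / 2 ∧
      β.nuL = (ξ₂ - ξ₁) / 2 ∧ β.nuR = (ξ₂ - ξ₁) / 2 ∧
      Sf β = ξ₁ ∧ Hf β = ξ₂ ∧ E2 β = 0 ∧ E3 β = 0 ∧
      ∀ γ : IVIFN, Sf γ = ξ₁ → Hf γ = ξ₂ → leHZX β γ := by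
  have hS := IVIFN.Sf_ofScoreAccuracy ξ₁ ξ₂ h1 h2
  have hH := IVIFN.Hf_ofScoreAccuracy ξ₁ ξ₂ h1 h2
  have hE2 := IVIFN.E2_ofScoreAccuracy ξ₁ ξ₂ h1 h2
  refine ⟨IVIFN.ofScoreAccuracy ξ₁ ξ₂ h1 h2, rfl, rfl, rfl, rfl, hS, hH, hE2,
    IVIFN.E3_ofScoreAccuracy ξ₁ ξ₂ h1 h2, fun γ hγS hγH => ?_⟩
  exact IVIFN.leHZX_of_E2_eq_zero (hS.trans hγS.symm) (hH.trans hγH.symm) hE2
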